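/- arXiv:2008.08943 — 2 statements merged into one kernel-verified Lean document; each statement's English description precedes it below -/
import Mathlib

section
/- Let X be a simplicial set, G a simplicial group, and τ : X_{>0} → G a twisting function. Let n = k + l with k, l ≥ 0, and write i ∈ S_n as i = (i_1, i_2) where i_1 consists of the first l entries and i_2 of the last k entries, so that i_1 ∈ S_n(p) for p = (0 = p_0 < p_1 < ⋯ < p_{k+1} = n+1) the set left by the removal procedure of i_1 on {0,…,n+1}, and i_2 ∈ S_k. Then for every x ∈ X_n, (∂_0)^l hatSz_i x = hatSz_{i_2} x(p_1 − 1, p_2 − 1, …, p_{k+1} − 1) in (X ×_τ G)_k. -/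
open CategoryTheory

/-- `memS n l i` means `i ∈ S_{n,l}`: a sequence of length `l` with
`0 ≤ i_s ≤ n - s` for `1 ≤ s ≤ l` (here `i.getD t 0` is the entry `i_{t+1}`). -/
def memS (n l : ℕ) (i : List ℕ) : Prop :=
  i.length = l ∧ ∀ t < l, i.getD t 0 + t + 1 ≤ n

/-- The ordered set remaining from `{0, …, n}` after performing the first `r`
removal steps prescribed by `i`: at each step the element at (0-indexed)
position `i_r + 1` of the remaining set is removed. -/
def restAfter (n : ℕ) (i : List ℕ) (r : ℕ) : List ℕ :=
  (i.take r).foldl (fun L a => L.eraseIdx (a + 1)) (List.range (n + 1))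

/-- The ordered set remaining from `{0, …, n}` after the whole removal
procedure prescribed by `i`. -/
def restList (n : ℕ) (i : List ℕ) : List ℕ := restAfter n i i.length

/-- The element `e_{r+1}` removed at (0-indexed) step `r` of the removal
procedure on `{0, …, n}` prescribed by `i`. -/
def elemRemoved (n : ℕ) (i : List ℕ) (r : ℕ) : ℕ :=
  (restAfter n i r).getD (i.getD r 0 + 1) 0

/-- The component `α_s` of `Ψ_p(i)`, for the interval `(a, b) = (p_{s-1}, p_s)`:
the set of (0-indexed) steps at which an element strictly between `a` and `b`
is removed. -/
def psiAlpha (n : ℕ) (i : List ℕ) (a b : ℕ) : Finset ℕ :=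
  (Finset.range i.length).filter
    (fun r => a < elemRemoved n i r ∧ elemRemoved n i r < b)

/-- The component `j_s` of `Ψ_p(i)`, for the interval `(a, b) = (p_{s-1}, p_s)`:
its `u`-th entry is `w - 1` where the `u`-th element of `(a, b)` to be removed
is, at the moment of its removal, the `w`-th smallest element of `(a, b)` still
present. -/
def psiJ (n : ℕ) (i : List ℕ) (a b : ℕ) : List ℕ :=
  ((List.range i.length).filter
      (fun r => decide (a < elemRemoved n i r ∧ elemRemoved n i r < b))).map
    (fun r => ((restAfter n i r).filter
      (fun y => decide (a < y ∧ y < elemRemoved n i r))).length)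

/-- `α` is a `(q_0, …, q_{k-1})`-shuffle: an ordered partition of
`{0, …, q_0 + ⋯ + q_{k-1} - 1}` with `|α_s| = q_s`. -/
def IsShuffleF {k : ℕ} (q : Fin k → ℕ) (α : Fin k → Finset ℕ) : Prop :=
  (∀ s, (α s).card = q s) ∧ (∀ s t, s ≠ t → Disjoint (α s) (α t)) ∧
    Finset.univ.biUnion α = Finset.range (∑ s, q s)

/-- The sign exponent `(α)` of a shuffle: the number of pairs `(a, b)` with
`a ∈ α_s`, `b ∈ α_t`, `s < t` and `a > b`. -/
def shuffleExpN (k : ℕ) (α : ℕ → Finset ℕ) : ℕ :=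
  ∑ s ∈ Finset.range k, ∑ t ∈ Finset.range k,
    if s < t then ∑ a ∈ α s, ((α t).filter (fun b => b < a)).card else 0

/-- Vertex map of the derived operator. -/
def derivedFun (f : ℕ → ℕ) : ℕ → ℕ := fun t => if t = 0 then 0 else f (t - 1) + 1

/-- Vertex map of the face map `δ_j`. -/
def deltaFun (j : ℕ) : ℕ → ℕ := fun t => if t < j then t else t + 1

/-- Vertex map of the degeneracy map `σ_j`. -/
def sigmaFun (j : ℕ) : ℕ → ℕ := fun t => if t ≤ j then t else t - 1

/-- Vertex map of the Szczarba operator `D_i^k`. -/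
def DFun : List ℕ → ℕ → ℕ → ℕ
  | [], _ => id
  | (i1 :: i'), k =>
    if k < i1 then deltaFun (i1 - k) ∘ sigmaFun 0 ∘ derivedFun (DFun i' k)
    else if k = i1 then derivedFun (DFun i' k)
    else sigmaFun 0 ∘ derivedFun (DFun i' (k - 1))

/-- The morphism `[b] ⟶ [a]` in the simplex category whose vertex map is (the
monotone clamped version of) `f`.  When `f` is monotone and maps `[b]` into `[a]`
this is exactly the morphism with vertex map `f`. -/
def mkHomF (a b : ℕ) (f : ℕ → ℕ) : (SimplexCategory.mk b ⟶ SimplexCategory.mk a) :=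
  SimplexCategory.mkHom
    { toFun := fun t => ⟨min ((Finset.range (t.1 + 1)).sup f) a,
        Nat.lt_succ_of_le (min_le_right _ _)⟩
      monotone' := fun u v huv => by
        simp only [Fin.mk_le_mk]
        exact min_le_min
          (Finset.sup_mono (Finset.range_subset_range.mpr (Nat.succ_le_succ huv))) le_rfl }

open Simplicial in
/-- The natural simplicial operator `X_a → X_b` with vertex map `f : [b] → [a]`. -/
def simpOp (X : SSet) (f : ℕ → ℕ) (a b : ℕ) (x : X _⦋a⦌) : X _⦋b⦌ :=
  X.map (mkHomF a b f).op x

open Simplicial in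
/-- The natural simplicial operator `G_a → G_b` with vertex map `f : [b] → [a]`,
for a simplicial group `G`. -/
def grpOp (G : CategoryTheory.SimplicialObject GrpCat) (f : ℕ → ℕ) (a b : ℕ)
    (g : G _⦋a⦌) : G _⦋b⦌ :=
  (G.map (mkHomF a b f).op) g

open Simplicial in
/-- A twisting function `τ : X_{>0} → G`. -/
structure TwistingFn (X : SSet) (G : CategoryTheory.SimplicialObject GrpCat) where
  map : ∀ n : ℕ, X _⦋n + 1⦌ → G _⦋n⦌
  d0 : ∀ (n : ℕ) (x : X _⦋n + 2⦌),
    grpOp G (deltaFun 0) (n + 1) n (map (n + 1) x)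
      = (map n (simpOp X (deltaFun 0) (n + 2) (n + 1) x))⁻¹
        * map n (simpOp X (deltaFun 1) (n + 2) (n + 1) x)
  dk : ∀ (n k : ℕ) (x : X _⦋n + 2⦌), 0 < k → k < n + 2 →
    grpOp G (deltaFun k) (n + 1) n (map (n + 1) x)
      = map n (simpOp X (deltaFun (k + 1)) (n + 2) (n + 1) x)
  sk : ∀ (n k : ℕ) (x : X _⦋n + 1⦌), k < n + 1 →
    grpOp G (sigmaFun k) n (n + 1) (map n x)
      = map (n + 1) (simpOp X (sigmaFun (k + 1)) (n + 1) (n + 2) x)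
  s0 : ∀ (n : ℕ) (x : X _⦋n⦌), map n (simpOp X (sigmaFun 0) n (n + 1) x) = 1

open Simplicial in
/-- Szczarba's operator `Sz_i : X_{n+1} → G_n`. -/
def Sz {X : SSet} {G : CategoryTheory.SimplicialObject GrpCat} (τ : TwistingFn X G)
    (n : ℕ) (i : List ℕ) (x : X _⦋n + 1⦌) : G _⦋n⦌ :=
  ((List.range (n + 1)).map (fun r =>
    grpOp G (DFun i r) (n - r) n
      ((τ.map (n - r) (simpOp X (fun t => t + r) (n + 1) ((n - r) + 1) x))⁻¹))).prod

open Simplicial in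
/-- The group component of the operator `hatSz_i : X_n → X_n × G_n`. -/
def hatSzG {X : SSet} {G : CategoryTheory.SimplicialObject GrpCat} (τ : TwistingFn X G)
    (n : ℕ) (i : List ℕ) (x : X _⦋n⦌) : G _⦋n⦌ :=
  ((List.range n).map (fun r =>
    grpOp G (DFun i (r + 1)) (n - (r + 1)) n
      ((τ.map (n - (r + 1)) (simpOp X (fun t => t + r) n ((n - (r + 1)) + 1) x))⁻¹))).prod

open Simplicial in
/-- Szczarba's operator `hatSz_i : X_n → (X ×_τ G)_n = X_n × G_n`. -/
def hatSz {X : SSet} {G : CategoryTheory.SimplicialObject GrpCat} (τ : TwistingFn X G)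
    (n : ℕ) (i : List ℕ) (x : X _⦋n⦌) : X _⦋n⦌ × G _⦋n⦌ :=
  (simpOp X (DFun i 0) n n x, hatSzG τ n i x)

open Simplicial in
/-- The `r`-fold iterate of the zeroth face map of the twisted Cartesian
product `X ×_τ G`. -/
def twD0pow {X : SSet} {G : CategoryTheory.SimplicialObject GrpCat} (τ : TwistingFn X G) :
    (r : ℕ) → (m : ℕ) → X _⦋m + r⦌ × (G _⦋m + r⦌ : Type _) → X _⦋m⦌ × (G _⦋m⦌ : Type _) := fun r m z => match r, m, z with
  | 0, _, z => z
  | r + 1, m, z =>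
      twD0pow τ r m
        (simpOp X (deltaFun 0) (m + r + 1) (m + r) z.1,
         τ.map (m + r) z.1 * grpOp G (deltaFun 0) (m + r + 1) (m + r) z.2)

/-- Vertex map of the iterated degeneracy `s_B` on a finite set `B`. -/
def degenFun (B : Finset ℕ) : ℕ → ℕ := fun t => t - (B.filter (fun b => b < t)).card

/-- The map `Φ : S_n × [n] → S_{n-1} × [n-1]`. -/
def Phi : List ℕ → ℕ → List ℕ × ℕ
  | [], _ => ([], 0)
  | (i1 :: i'), p =>
    if p < i1 then ((i1 - 1) :: (Phi i' p).1, (Phi i' p).2 + 1)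
    else if p = i1 ∨ p = i1 + 1 then (i', 0)
    else (i1 :: (Phi i' (p - 1)).1, (Phi i' (p - 1)).2 + 1)

/-!
Induction on `l`, removing one entry `i₁` at a time. The case `l = 1` is the identity
`∂₀ hatSz_{(i₁, i')} x = hatSz_{i'} (∂_{i₁} x)`. On the side of the removal procedure, removing the
element at position `i₁ + 1` re-indexes the remaining vertices by `δ_{i₁+1}`, and this matches the
face `∂_{i₁}`.

To prove the case `l = 1`, apply `∂₀` to each factor `D^{r+1}_i σ(∂₀^r x)`. If `r + 1 < i₁`,
`r + 1 = i₁` or `r + 1 > i₁`, the vertex map of `D^{r+1}_i δ₀` is, respectively,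
`δ_{i₁-r-1} D^{r+1}_{i'}`, `δ₀ D^{r+1}_{i'}` or `D^r_{i'}`. The twisting identities then turn each
factor into the corresponding factor of `hatSz_{i'} (∂_{i₁} x)`, with one extra factor `c` and its
inverse left over. If `i₁ > 0`, `c` appears at `r = i₁ - 1` and cancels with the next factor, and
the leading factor `τ(D⁰_i x)` of the twisted face is `1`. If `i₁ = 0`, the leading factor is `c`
itself. The only step that is not formal is that `τ` commutes with derived operators:
`τ(φ'^* x) = φ^* τ(x)` whenever `φ(0) = 0`. This holds because such a `φ` is a composite of
degeneracies and of faces `δ_j` with `j > 0`.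
-/

open Simplicial

/-- `f` restricts to a monotone map `[b] → [a]`. -/
structure IsVertexMap (a b : ℕ) (f : ℕ → ℕ) : Prop where
  monotoneOn : MonotoneOn f (Set.Iic b)
  map_le : f b ≤ a

namespace IsVertexMap

variable {a b c : ℕ} {f g : ℕ → ℕ}

theorem of_monotone (hf : Monotone f) (h : f b ≤ a) : IsVertexMap a b f :=
  ⟨hf.monotoneOn _, h⟩

theorem le (hf : IsVertexMap a b f) {t : ℕ} (ht : t ≤ b) : f t ≤ a :=
  (hf.monotoneOn ht (le_refl b) ht).trans hf.map_le

theorem comp (hf : IsVertexMap a b f) (hg : IsVertexMap b c g) :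
    IsVertexMap a c (fun t => f (g t)) :=
  ⟨fun _ hu _ hv huv => hf.monotoneOn (hg.le hu) (hg.le hv) (hg.monotoneOn hu hv huv),
    hf.le hg.map_le⟩

theorem derived (hf : IsVertexMap a b f) : IsVertexMap (a + 1) (b + 1) (derivedFun f) := by
  refine ⟨fun u hu v hv huv => ?_, by simpa [derivedFun] using hf.map_le⟩
  simp only [Set.mem_Iic] at hu hv
  unfold derivedFun
  split_ifs <;> first | omega | exact Nat.succ_le_succ (hf.monotoneOn (by simp; omega)
    (by simp; omega) (by omega))

end IsVertexMap

theorem mkHomF_apply {a b : ℕ} {f : ℕ → ℕ} (hf : IsVertexMap a b f) (t : Fin (b + 1)) :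
    ((mkHomF a b f).toOrderHom t : ℕ) = f t := by
  have ht : (t : ℕ) ≤ b := Nat.lt_succ_iff.mp t.isLt
  have hsup : (Finset.range (t + 1)).sup f = f t :=
    le_antisymm (Finset.sup_le fun u hu => hf.monotoneOn
      ((Nat.lt_succ_iff.mp (Finset.mem_range.mp hu)).trans ht) ht
      (Nat.lt_succ_iff.mp (Finset.mem_range.mp hu)))
      (Finset.le_sup (Finset.self_mem_range_succ _))
  show min ((Finset.range (t + 1)).sup f) a = f t
  rw [hsup, min_eq_left (hf.le ht)]

theorem mkHomF_congr {a b : ℕ} {f g : ℕ → ℕ} (h : ∀ t ≤ b, f t = g t) :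
    mkHomF a b f = mkHomF a b g := by
  ext t : 3
  refine Fin.ext (congrArg (min · a) (Finset.sup_congr rfl fun u hu => h u ?_))
  exact (Nat.lt_succ_iff.mp (Finset.mem_range.mp hu)).trans (Nat.lt_succ_iff.mp t.isLt)

theorem mkHomF_comp {a b c : ℕ} {f g : ℕ → ℕ} (hf : IsVertexMap a b f)
    (hg : IsVertexMap b c g) :
    mkHomF b c g ≫ mkHomF a b f = mkHomF a c (fun t => f (g t)) := by
  ext t : 3
  refine Fin.ext ?_
  rw [mkHomF_apply (hf.comp hg), SimplexCategory.comp_toOrderHom, OrderHom.comp_coe,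
    Function.comp_apply, mkHomF_apply hf, mkHomF_apply hg]

theorem mkHomF_eq_id {a : ℕ} {f : ℕ → ℕ} (h : ∀ t ≤ a, f t = t) : mkHomF a a f = 𝟙 _ := by
  rw [mkHomF_congr h]
  ext t : 3
  exact Fin.ext (mkHomF_apply (f := fun t => t) (.of_monotone monotone_id le_rfl) t)

section Operators

variable (X : SSet) (G : SimplicialObject GrpCat) {a b c : ℕ} {f g h : ℕ → ℕ}

theorem simpOp_congr (hfg : ∀ t ≤ b, f t = g t) (x : X _⦋a⦌) :
    simpOp X f a b x = simpOp X g a b x := by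
  rw [simpOp, mkHomF_congr hfg]; rfl

theorem simpOp_simpOp (hf : IsVertexMap a b f) (hg : IsVertexMap b c g)
    (hh : ∀ t ≤ c, f (g t) = h t) (x : X _⦋a⦌) :
    simpOp X g b c (simpOp X f a b x) = simpOp X h a c x := by
  rw [simpOp, simpOp, ← Functor.map_comp_apply, ← op_comp, mkHomF_comp hf hg,
    mkHomF_congr hh]
  rfl

theorem simpOp_eq_self (hf : ∀ t ≤ a, f t = t) (x : X _⦋a⦌) : simpOp X f a a x = x := by
  rw [simpOp, mkHomF_eq_id hf, op_id, Functor.map_id_apply]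

theorem grpOp_congr (hfg : ∀ t ≤ b, f t = g t) (x : G _⦋a⦌) :
    grpOp G f a b x = grpOp G g a b x := by
  rw [grpOp, mkHomF_congr hfg]; rfl

theorem grpOp_grpOp (hf : IsVertexMap a b f) (hg : IsVertexMap b c g)
    (hh : ∀ t ≤ c, f (g t) = h t) (x : G _⦋a⦌) :
    grpOp G g b c (grpOp G f a b x) = grpOp G h a c x := by
  rw [grpOp, grpOp, grpOp, ← mkHomF_congr hh, ← mkHomF_comp hf hg, op_comp, G.map_comp]
  rfl

theorem grpOp_eq_self (hf : ∀ t ≤ a, f t = t) (x : G _⦋a⦌) : grpOp G f a a x = x := by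
  rw [grpOp, mkHomF_eq_id hf, op_id, G.map_id]; rfl

theorem grpOp_one : grpOp G f a b 1 = 1 := map_one _

theorem grpOp_mul (x y : G _⦋a⦌) : grpOp G f a b (x * y) = grpOp G f a b x * grpOp G f a b y :=
  map_mul _ _ _

theorem grpOp_inv (x : G _⦋a⦌) : grpOp G f a b x⁻¹ = (grpOp G f a b x)⁻¹ := map_inv _ _

theorem grpOp_list_prod (l : List (G _⦋a⦌)) :
    grpOp G f a b l.prod = (l.map (grpOp G f a b)).prod :=
  map_list_prod _ _

end Operators

theorem deltaFun_zero_apply (t : ℕ) : deltaFun 0 t = t + 1 := by simp [deltaFun]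

theorem deltaFun_le_succ (j t : ℕ) : deltaFun j t ≤ t + 1 := by
  unfold deltaFun; split <;> omega

theorem deltaFun_add (j r t : ℕ) : deltaFun j t + r = deltaFun (j + r) (t + r) := by
  unfold deltaFun; split <;> split <;> omega

theorem deltaFun_sigmaFun_of_ne {j v : ℕ} (h : v ≠ j) : deltaFun j (sigmaFun j v) = v := by
  unfold deltaFun sigmaFun; split <;> split <;> omega

theorem sigmaFun_zero_succ (t : ℕ) : sigmaFun 0 (t + 1) = t := by simp [sigmaFun]

theorem deltaFun_monotone (j : ℕ) : Monotone (deltaFun j) := by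
  intro u v huv; unfold deltaFun; split <;> split <;> omega

theorem sigmaFun_monotone (j : ℕ) : Monotone (sigmaFun j) := by
  intro u v huv; unfold sigmaFun; split <;> split <;> omega

theorem derivedFun_succ (f : ℕ → ℕ) (t : ℕ) : derivedFun f (t + 1) = f t + 1 := by
  simp [derivedFun]

theorem derivedFun_monotone {f : ℕ → ℕ} (hf : Monotone f) : Monotone (derivedFun f) := by
  rintro (_ | u) (_ | v) huv
  · exact le_rfl
  · exact Nat.zero_le _
  · omega
  · simpa [derivedFun_succ] using hf (Nat.succ_le_succ_iff.mp huv)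

theorem derivedFun_congr {f g : ℕ → ℕ} {b : ℕ} (h : ∀ t ≤ b, f t = g t) :
    ∀ t ≤ b + 1, derivedFun f t = derivedFun g t := by
  rintro (_ | t) ht
  · rfl
  · rw [derivedFun_succ, derivedFun_succ, h t (by omega)]

theorem derivedFun_comp (f g : ℕ → ℕ) :
    derivedFun (fun t => f (g t)) = fun t => derivedFun f (derivedFun g t) := by
  funext t
  cases t with
  | zero => rfl
  | succ t => simp [derivedFun_succ]

theorem derivedFun_deltaFun (j : ℕ) : derivedFun (deltaFun j) = deltaFun (j + 1) := by
  funext t; cases t <;> simp [derivedFun, deltaFun]; split <;> omega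

theorem derivedFun_sigmaFun (j : ℕ) : derivedFun (sigmaFun j) = sigmaFun (j + 1) := by
  funext t; cases t <;> simp [derivedFun, sigmaFun]; split <;> omega

theorem isVertexMap_deltaFun {a b : ℕ} (j : ℕ) (h : b + 1 ≤ a) : IsVertexMap a b (deltaFun j) :=
  .of_monotone (deltaFun_monotone j) ((deltaFun_le_succ j b).trans h)

theorem isVertexMap_sigmaFun {a j : ℕ} (h : j ≤ a) : IsVertexMap a (a + 1) (sigmaFun j) :=
  .of_monotone (sigmaFun_monotone j) (by unfold sigmaFun; split <;> omega)

theorem isVertexMap_add_right {a b r : ℕ} (h : b + r ≤ a) : IsVertexMap a b (· + r) :=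
  .of_monotone (fun _ _ huv => Nat.add_le_add_right huv r) h

theorem DFun_cons (i1 : ℕ) (i' : List ℕ) (k : ℕ) :
    DFun (i1 :: i') k = if k < i1 then deltaFun (i1 - k) ∘ sigmaFun 0 ∘ derivedFun (DFun i' k)
      else if k = i1 then derivedFun (DFun i' k)
      else sigmaFun 0 ∘ derivedFun (DFun i' (k - 1)) := rfl

theorem DFun_monotone (i : List ℕ) (k : ℕ) : Monotone (DFun i k) := by
  induction i generalizing k with
  | nil => exact monotone_id
  | cons i1 i' ih =>
    rw [DFun_cons]
    split_ifs
    · exact (deltaFun_monotone _).comp ((sigmaFun_monotone _).comp (derivedFun_monotone (ih k)))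
    · exact derivedFun_monotone (ih k)
    · exact (sigmaFun_monotone _).comp (derivedFun_monotone (ih _))

theorem DFun_zero (i : List ℕ) (k : ℕ) : DFun i k 0 = 0 := by
  cases i with
  | nil => rfl
  | cons i1 i' => rw [DFun_cons]; split_ifs <;> simp [derivedFun, sigmaFun, deltaFun]; omega

theorem DFun_cons_succ_of_le {i1 k : ℕ} (i' : List ℕ) (hk : k ≤ i1) (t : ℕ) :
    DFun (i1 :: i') k (t + 1) = deltaFun (i1 - k) (DFun i' k t) := by
  rw [DFun_cons]
  split_ifs with h h'
  · simp [derivedFun_succ, sigmaFun_zero_succ]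
  · simp [h', derivedFun_succ, deltaFun_zero_apply]
  · omega

theorem DFun_cons_succ_of_lt {i1 k : ℕ} (i' : List ℕ) (hk : i1 < k) (t : ℕ) :
    DFun (i1 :: i') k (t + 1) = DFun i' (k - 1) t := by
  rw [DFun_cons, if_neg (by omega), if_neg (by omega)]
  simp [derivedFun_succ, sigmaFun_zero_succ]

theorem memS.head_le {n i1 : ℕ} {j : List ℕ} (hi : memS (n + 1) (n + 1) (i1 :: j)) : i1 ≤ n := by
  simpa using hi.2 0 (by omega)

theorem memS.tail {n i1 : ℕ} {j : List ℕ} (hi : memS (n + 1) (n + 1) (i1 :: j)) :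
    memS n n j :=
  ⟨by simpa using hi.1, fun t ht => by
    have h := hi.2 (t + 1) (by omega)
    rw [List.getD_cons_succ] at h
    omega⟩

theorem DFun_le {n : ℕ} {i : List ℕ} (hi : memS n n i) (k : ℕ) : DFun i k n ≤ n - k := by
  induction i generalizing n k with
  | nil => obtain rfl : n = 0 := hi.1.symm; exact Nat.zero_le _
  | cons i1 j ih =>
    obtain ⟨n, rfl⟩ : ∃ m, n = m + 1 := ⟨j.length, hi.1.symm⟩
    have hi1 := hi.head_le
    by_cases hk : k ≤ i1
    · rw [DFun_cons_succ_of_le j hk]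
      have := ih hi.tail k
      have := deltaFun_le_succ (i1 - k) (DFun j k n)
      omega
    · rw [DFun_cons_succ_of_lt j (by omega)]
      have := ih hi.tail (k - 1)
      omega

theorem isVertexMap_DFun {n : ℕ} {i : List ℕ} (hi : memS n n i) (k : ℕ) :
    IsVertexMap (n - k) n (DFun i k) :=
  .of_monotone (DFun_monotone i k) (DFun_le hi k)

theorem isVertexMap_DFun_zero {n : ℕ} {i : List ℕ} (hi : memS n n i) :
    IsVertexMap n n (DFun i 0) :=
  isVertexMap_DFun hi 0

theorem add_le_of_forall_lt_succ {m' : ℕ} {f : ℕ → ℕ} (hstep : ∀ j < m', f j < f (j + 1)) :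
    ∀ u t, t + u ≤ m' → f t + u ≤ f (t + u) := by
  intro u
  induction u with
  | zero => simp
  | succ u ih =>
    intro t htu
    have := hstep (t + u) (by omega)
    have := ih t (by omega)
    show f t + (u + 1) ≤ f (t + u + 1)
    omega

theorem IsVertexMap.cases_of_map_zero {m m' : ℕ} {f : ℕ → ℕ} (hf : IsVertexMap m m' f)
    (h0 : f 0 = 0) :
    (∃ j < m', f j = f (j + 1)) ∨ (∃ j, 0 < j ∧ j ≤ m ∧ ∀ t ≤ m', f t ≠ j) ∨
      (m' = m ∧ ∀ t ≤ m', f t = t) := by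
  by_cases hdeg : ∃ j < m', f j = f (j + 1)
  · exact .inl hdeg
  push Not at hdeg
  have hgrow := add_le_of_forall_lt_succ fun j hj =>
    (hf.monotoneOn (show j ≤ m' by omega) (show j + 1 ≤ m' by omega) (Nat.le_succ j)).lt_of_ne
      (hdeg j hj)
  by_cases hgap : ∃ j ≤ m, ∀ t ≤ m', f t ≠ j
  · obtain ⟨j, hjm, hj⟩ := hgap
    exact .inr (.inl ⟨j, Nat.pos_of_ne_zero fun h => hj 0 (Nat.zero_le _) (h0.trans h.symm),
      hjm, hj⟩)
  push Not at hgap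
  have hmm' : m ≤ m' := by
    have hsub : Finset.range (m + 1) ⊆ (Finset.range (m' + 1)).image f := fun j hj => by
      obtain ⟨t, ht, rfl⟩ := hgap j (Nat.lt_succ_iff.mp (Finset.mem_range.mp hj))
      exact Finset.mem_image_of_mem f (Finset.mem_range.mpr (Nat.lt_succ_of_le ht))
    simpa using (Finset.card_le_card hsub).trans Finset.card_image_le
  have hm'm : m' ≤ m := by
    have h := hgrow m' 0 (by omega)
    simp only [h0, zero_add] at h
    exact h.trans hf.map_le
  refine .inr (.inr ⟨le_antisymm hm'm hmm', fun t ht => ?_⟩)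
  have h1 := hgrow t 0 (by omega)
  have h2 := hgrow (m' - t) t (by omega)
  rw [Nat.add_sub_cancel' ht] at h2
  have := hf.map_le
  simp only [h0, zero_add] at h1
  omega

theorem mul_prod_range_succ_eq {M : Type*} [Group M] {A B : ℕ → M} {C : M} {n : ℕ}
    (h0 : A 0 = C⁻¹) (hs : ∀ r < n, A (r + 1) = B r) :
    C * ((List.range (n + 1)).map A).prod = ((List.range n).map B).prod := by
  rw [List.prod_range_succ', h0, mul_inv_cancel_left]
  exact congrArg List.prod (List.map_congr_left fun r hr => hs r (List.mem_range.mp hr))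

theorem prod_range_succ_eq_of_cancel {M : Type*} [Group M] {A B : ℕ → M} {C : M} {m n : ℕ}
    (hmn : m < n) (hlt : ∀ r < m, A r = B r) (hm : A m = B m * C) (hm1 : A (m + 1) = C⁻¹)
    (hgt : ∀ r, m < r → r < n → A (r + 1) = B r) :
    ((List.range (n + 1)).map A).prod = ((List.range n).map B).prod := by
  induction n, hmn using Nat.le_induction with
  | base =>
    have hpre : ((List.range m).map A).prod = ((List.range m).map B).prod :=
      congrArg List.prod (List.map_congr_left fun r hr => hlt r (List.mem_range.mp hr))
    rw [List.prod_range_succ, List.prod_range_succ, List.prod_range_succ, hpre, hm, hm1,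
      mul_assoc, mul_inv_cancel_right]
  | succ n hmn ih =>
    rw [List.prod_range_succ A (n + 1), ih fun r h1 h2 => hgt r h1 (by omega),
      hgt n hmn (by omega), ← List.prod_range_succ]

theorem range_eraseIdx_succ {n m : ℕ} (hm : m ≤ n) :
    (List.range (n + 2)).eraseIdx (m + 1) = (List.range (n + 1)).map (deltaFun (m + 1)) := by
  apply List.ext_getElem
  · simp [List.length_eraseIdx]
    omega
  · intro t h1 h2
    rw [List.getElem_map, List.getElem_range]
    rcases Nat.lt_or_ge t (m + 1) with h | h
    · rw [List.getElem_eraseIdx_of_lt h1 h, List.getElem_range, deltaFun, if_pos h]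
    · rw [List.getElem_eraseIdx_of_ge h1 h, List.getElem_range, deltaFun, if_neg (by omega)]

theorem foldl_eraseIdx_succ_map (f : ℕ → ℕ) (l L : List ℕ) :
    l.foldl (fun L a => L.eraseIdx (a + 1)) (L.map f) =
      (l.foldl (fun L a => L.eraseIdx (a + 1)) L).map f := by
  induction l generalizing L with
  | nil => rfl
  | cons a l ih => rw [List.foldl_cons, List.foldl_cons, List.eraseIdx_map, ih]

theorem restList_nil (n : ℕ) : restList n [] = List.range (n + 1) := rfl

theorem restList_cons {n i1 : ℕ} (j : List ℕ) (h : i1 ≤ n) :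
    restList (n + 1) (i1 :: j) = (restList n j).map (deltaFun (i1 + 1)) := by
  simp only [restList, restAfter, List.take_length, List.foldl_cons]
  rw [range_eraseIdx_succ h, foldl_eraseIdx_succ_map]

theorem restList_sublist (n : ℕ) (i : List ℕ) : (restList n i).Sublist (List.range (n + 1)) := by
  simp only [restList, restAfter, List.take_length]
  suffices ∀ L : List ℕ, L.Sublist (List.range (n + 1)) →
      (i.foldl (fun L a => L.eraseIdx (a + 1)) L).Sublist (List.range (n + 1)) from
    this _ (List.Sublist.refl _)
  induction i with
  | nil => exact fun L h => h
  | cons a i ih => exact fun L h => ih _ ((List.eraseIdx_sublist _ _).trans h)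

theorem length_restList_take {k l : ℕ} {i : List ℕ} (hi : memS (k + l) (k + l) i) :
    (restList (k + l + 1) (i.take l)).length = k + 2 := by
  induction l generalizing i with
  | zero => simp [restList_nil]
  | succ l ih =>
    obtain ⟨i1, j, rfl⟩ := List.exists_cons_of_length_eq_add_one hi.1
    replace hi : memS (k + l + 1) (k + l + 1) (i1 :: j) := hi
    show (restList (k + l + 1 + 1) (i1 :: j.take l)).length = k + 2
    rw [restList_cons _ (by have := hi.head_le; omega), List.length_map, ih hi.tail]

/-- The vertex map `t ↦ p_{t+1} - 1` of the face `x(p_1 - 1, …, p_{k+1} - 1)`, for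
`R = (p_0, …, p_{k+1})`. -/
def restFaceMap (R : List ℕ) (t : ℕ) : ℕ := R.getD (t + 1) 0 - 1

theorem getD_lt_getD_of_sublist_range {n : ℕ} {R : List ℕ} (hR : R.Sublist (List.range n))
    {u v : ℕ} (huv : u < v) (hv : v < R.length) : R.getD u 0 < R.getD v 0 := by
  rw [List.getD_eq_getElem _ _ (huv.trans hv), List.getD_eq_getElem _ _ hv]
  exact List.pairwise_iff_getElem.mp (List.pairwise_lt_range.sublist hR) u v _ hv huv

theorem deltaFun_sub_one {j v : ℕ} (hv : 0 < v) :
    deltaFun j (v - 1) = deltaFun (j + 1) v - 1 := by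
  unfold deltaFun; split <;> split <;> omega

theorem isVertexMap_restFaceMap {n k : ℕ} {R : List ℕ} (hR : R.Sublist (List.range (n + 2)))
    (hlen : R.length = k + 2) : IsVertexMap n k (restFaceMap R) := by
  refine ⟨fun u hu v hv huv => ?_, ?_⟩
  · simp only [Set.mem_Iic] at hu hv
    rcases huv.lt_or_eq with huv | rfl
    · have := getD_lt_getD_of_sublist_range hR (by omega : u + 1 < v + 1) (by omega)
      simp only [restFaceMap]
      omega
    · exact le_rfl
  · have hmem : R.getD (k + 1) 0 ∈ List.range (n + 2) :=
      hR.subset (by rw [List.getD_eq_getElem _ _ (by omega)]; exact List.getElem_mem _)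
    simp only [restFaceMap]
    have := List.mem_range.mp hmem
    omega

theorem restFaceMap_map_deltaFun {n k j t : ℕ} {R : List ℕ} (hR : R.Sublist (List.range n))
    (hlen : R.length = k + 2) (ht : t ≤ k) :
    deltaFun j (restFaceMap R t) = restFaceMap (R.map (deltaFun (j + 1))) t := by
  have hpos := getD_lt_getD_of_sublist_range hR (by omega : 0 < t + 1) (by omega)
  rw [restFaceMap, restFaceMap, deltaFun_sub_one (by omega),
    List.getD_eq_getElem (R.map _) _ (by rw [List.length_map]; omega), List.getElem_map,
    ← List.getD_eq_getElem R 0 (by omega)]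

namespace TwistingFn

variable {X : SSet} {G : SimplicialObject GrpCat} (τ : TwistingFn X G)

theorem map_simpOp_derivedFun_sigmaFun_comp {m m' j : ℕ} {g : ℕ → ℕ} (hg : IsVertexMap m m' g)
    (hj : j ≤ m') (x : X _⦋m + 1⦌)
    (hgx : τ.map m' (simpOp X (derivedFun g) (m + 1) (m' + 1) x) = grpOp G g m m' (τ.map m x)) :
    τ.map (m' + 1) (simpOp X (derivedFun fun t => g (sigmaFun j t)) (m + 1) (m' + 2) x) =
      grpOp G (fun t => g (sigmaFun j t)) m (m' + 1) (τ.map m x) := by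
  rw [derivedFun_comp g (sigmaFun j), derivedFun_sigmaFun,
    ← simpOp_simpOp X hg.derived (isVertexMap_sigmaFun (by omega)) (fun _ _ => rfl),
    ← τ.sk m' j _ (by omega), hgx,
    grpOp_grpOp G hg (isVertexMap_sigmaFun hj) (fun _ _ => rfl)]

theorem map_simpOp_derivedFun_deltaFun_comp {m m' j : ℕ} {g : ℕ → ℕ} (hg : IsVertexMap m m' g)
    (hj0 : 0 < j) (hjm : j ≤ m + 1) (x : X _⦋m + 2⦌)
    (hg' : ∀ y : X _⦋m + 1⦌,
      τ.map m' (simpOp X (derivedFun g) (m + 1) (m' + 1) y) = grpOp G g m m' (τ.map m y)) :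
    τ.map m' (simpOp X (derivedFun fun t => deltaFun j (g t)) (m + 2) (m' + 1) x) =
      grpOp G (fun t => deltaFun j (g t)) (m + 1) m' (τ.map (m + 1) x) := by
  rw [derivedFun_comp (deltaFun j) g, derivedFun_deltaFun,
    ← simpOp_simpOp X (isVertexMap_deltaFun _ le_rfl) hg.derived (fun _ _ => rfl), hg',
    ← τ.dk m j x hj0 (by omega),
    grpOp_grpOp G (isVertexMap_deltaFun j le_rfl) hg (fun _ _ => rfl)]

theorem map_simpOp_derivedFun {m m' : ℕ} {f : ℕ → ℕ} (hf : IsVertexMap m m' f)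
    (h0 : f 0 = 0) (x : X _⦋m + 1⦌) :
    τ.map m' (simpOp X (derivedFun f) (m + 1) (m' + 1) x) = grpOp G f m m' (τ.map m x) := by
  obtain ⟨N, hN⟩ : ∃ N, m + m' = N := ⟨_, rfl⟩
  induction N using Nat.strong_induction_on generalizing m m' f with
  | _ N ih =>
  rcases hf.cases_of_map_zero h0 with ⟨j, hj, hjf⟩ | ⟨j, hj0, hjm, hjf⟩ | ⟨rfl, hid⟩
  · -- `f = (f ∘ δ_j) ∘ σ_j`
    obtain ⟨m', rfl⟩ : ∃ m'', m' = m'' + 1 := ⟨m' - 1, by omega⟩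
    have hfg : f = fun t => f (deltaFun j (sigmaFun j t)) := by
      funext t
      simp only [deltaFun, sigmaFun]
      split_ifs <;>
        first | rfl | (congr 1; omega) | (obtain rfl : t = j := (by omega); exact hjf)
    have hg : IsVertexMap m m' fun t => f (deltaFun j t) :=
      hf.comp (isVertexMap_deltaFun j le_rfl)
    have hg0 : f (deltaFun j 0) = 0 := by
      rcases Nat.eq_zero_or_pos j with rfl | hj0
      · rwa [deltaFun_zero_apply, ← hjf]
      · simpa [deltaFun, hj0] using h0
    rw [hfg]
    exact τ.map_simpOp_derivedFun_sigmaFun_comp hg (by omega) x (ih _ (by omega) hg hg0 x rfl)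
  · -- `f = δ_j ∘ (σ_j ∘ f)` on `[m']`, as `f` misses `j`
    obtain ⟨m, rfl⟩ : ∃ mm, m = mm + 1 := ⟨m - 1, by omega⟩
    have hfg : ∀ t ≤ m', f t = deltaFun j (sigmaFun j (f t)) := fun t ht =>
      (deltaFun_sigmaFun_of_ne (hjf t ht)).symm
    have hg : IsVertexMap m m' fun t => sigmaFun j (f t) := by
      refine ⟨fun u hu v hv huv => sigmaFun_monotone j (hf.monotoneOn hu hv huv), ?_⟩
      have := hjf m' le_rfl
      have := hf.map_le
      simp only [sigmaFun]
      split <;> omega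
    rw [simpOp_congr X (derivedFun_congr hfg), grpOp_congr G hfg]
    exact τ.map_simpOp_derivedFun_deltaFun_comp hg hj0 hjm x
      fun y => ih _ (by omega) hg (by simp [h0, sigmaFun]) y rfl
  · have hid' : ∀ t ≤ m' + 1, derivedFun f t = t := fun t ht => by
      rw [derivedFun_congr hid t ht]; cases t <;> simp [derivedFun]
    rw [simpOp_eq_self X hid', grpOp_eq_self G hid]

/-- `f^* τ(y)`, where `y ∈ X_{a+1}` is the face of `x` on the vertices `r, …, r + a + 1`. -/
def tauFace (f : ℕ → ℕ) {N : ℕ} (x : X _⦋N⦌) (r a b : ℕ) : G _⦋b⦌ :=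
  grpOp G f a b (τ.map a (simpOp X (· + r) N (a + 1) x))

theorem hatSzG_eq (n : ℕ) (i : List ℕ) (x : X _⦋n⦌) :
    hatSzG τ n i x =
      ((List.range n).map fun r => (τ.tauFace (DFun i (r + 1)) x r (n - (r + 1)) n)⁻¹).prod := by
  simp only [hatSzG, tauFace, grpOp_inv]

theorem tauFace_congr {f g : ℕ → ℕ} {N r a b : ℕ} (hfg : ∀ t ≤ b, f t = g t) (x : X _⦋N⦌) :
    τ.tauFace f x r a b = τ.tauFace g x r a b :=
  grpOp_congr G hfg _

theorem grpOp_tauFace {f g : ℕ → ℕ} {N r a b c : ℕ} (hf : IsVertexMap a b f)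
    (hg : IsVertexMap b c g) (x : X _⦋N⦌) :
    grpOp G g b c (τ.tauFace f x r a b) = τ.tauFace (fun t => f (g t)) x r a c :=
  grpOp_grpOp G hf hg (fun _ _ => rfl) _

theorem grpOp_deltaFun_zero_hatSzG {n : ℕ} {i : List ℕ} (hi : memS (n + 1) (n + 1) i)
    (x : X _⦋n + 1⦌) :
    grpOp G (deltaFun 0) (n + 1) n (hatSzG τ (n + 1) i x) =
      ((List.range (n + 1)).map fun r =>
        (τ.tauFace (fun t => DFun i (r + 1) (t + 1)) x r (n - r) n)⁻¹).prod := by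
  rw [hatSzG_eq, grpOp_list_prod, List.map_map]
  refine congrArg List.prod (List.map_congr_left fun r _ => ?_)
  rw [Function.comp_apply, grpOp_inv,
    τ.grpOp_tauFace (isVertexMap_DFun hi (r + 1)) (isVertexMap_deltaFun 0 le_rfl)]
  simp only [deltaFun_zero_apply, Nat.add_sub_add_right]

theorem tauFace_deltaFun_comp {M a a' b r j : ℕ} {g : ℕ → ℕ} (hg : IsVertexMap a b g)
    (hrj : r + 1 < j) (hja : j ≤ a + r + 2) (ha : a' = a + 1) (hM : a + r + 2 ≤ M + 1)
    (x : X _⦋M + 1⦌) :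
    τ.tauFace (fun t => deltaFun (j - (r + 1)) (g t)) x r a' b =
      τ.tauFace g (simpOp X (deltaFun j) (M + 1) M x) r a b := by
  subst ha
  unfold tauFace
  rw [← grpOp_grpOp G (isVertexMap_deltaFun (j - (r + 1)) le_rfl) hg (fun _ _ => rfl),
    τ.dk a _ _ (by omega) (by omega),
    simpOp_simpOp X (isVertexMap_add_right (by omega)) (isVertexMap_deltaFun _ le_rfl)
      (fun _ _ => rfl),
    simpOp_simpOp X (isVertexMap_deltaFun _ le_rfl) (isVertexMap_add_right (by omega))
      (fun _ _ => rfl)]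
  congr 2
  exact simpOp_congr X (fun t _ => by rw [deltaFun_add]; congr 1; omega) x

theorem tauFace_deltaFun_zero_comp {M a a' b r : ℕ} {g : ℕ → ℕ} (hg : IsVertexMap a b g)
    (ha : a' = a + 1) (hM : a + r + 2 ≤ M + 1) (x : X _⦋M + 1⦌) :
    τ.tauFace (fun t => deltaFun 0 (g t)) x r a' b =
      (τ.tauFace g x (r + 1) a b)⁻¹ *
        τ.tauFace g (simpOp X (deltaFun (r + 1)) (M + 1) M x) r a b := by
  subst ha
  unfold tauFace
  have e0 : simpOp X (deltaFun 0) (a + 2) (a + 1) (simpOp X (· + r) (M + 1) (a + 1 + 1) x) =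
      simpOp X (· + (r + 1)) (M + 1) (a + 1) x :=
    simpOp_simpOp X (isVertexMap_add_right (by omega)) (isVertexMap_deltaFun _ le_rfl)
      (fun t _ => by rw [deltaFun_zero_apply]; omega) x
  have e1 : simpOp X (deltaFun 1) (a + 2) (a + 1) (simpOp X (· + r) (M + 1) (a + 1 + 1) x) =
      simpOp X (· + r) M (a + 1) (simpOp X (deltaFun (r + 1)) (M + 1) M x) := by
    rw [simpOp_simpOp X (isVertexMap_add_right (by omega)) (isVertexMap_deltaFun _ le_rfl)
        (fun _ _ => rfl),
      simpOp_simpOp X (isVertexMap_deltaFun _ le_rfl) (isVertexMap_add_right (by omega))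
        (fun _ _ => rfl)]
    exact simpOp_congr X (fun t _ => by rw [deltaFun_add, Nat.add_comm 1 r]) x
  rw [← grpOp_grpOp G (isVertexMap_deltaFun 0 le_rfl) hg (fun _ _ => rfl), τ.d0 a, e0, e1,
    grpOp_mul, grpOp_inv]

theorem tauFace_simpOp_deltaFun_of_le {M a b r k : ℕ} {g : ℕ → ℕ} (hkr : k ≤ r)
    (hM : a + r + 1 ≤ M) (x : X _⦋M + 1⦌) :
    τ.tauFace g (simpOp X (deltaFun k) (M + 1) M x) r a b = τ.tauFace g x (r + 1) a b := by
  unfold tauFace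
  rw [simpOp_simpOp X (isVertexMap_deltaFun k le_rfl) (isVertexMap_add_right (by omega))
    (h := (· + (r + 1))) (fun t _ => by simp only [deltaFun]; split <;> omega)]

theorem map_simpOp_DFun_cons_zero {n : ℕ} {j : List ℕ} (hj : memS n n j) (x : X _⦋n + 1⦌) :
    τ.map n (simpOp X (DFun (0 :: j) 0) (n + 1) (n + 1) x) = τ.tauFace (DFun j 0) x 0 n n := by
  rw [tauFace, simpOp_eq_self X (f := (· + 0)) (fun t _ => rfl) x]
  exact τ.map_simpOp_derivedFun (isVertexMap_DFun_zero hj) (DFun_zero j 0) x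

theorem map_simpOp_DFun_cons_zero_of_pos {n i1 : ℕ} {j : List ℕ} (hj : memS n n j)
    (hpos : 0 < i1) (x : X _⦋n + 1⦌) :
    τ.map n (simpOp X (DFun (i1 :: j) 0) (n + 1) (n + 1) x) = 1 := by
  have hx : simpOp X (DFun (i1 :: j) 0) (n + 1) (n + 1) x =
      simpOp X (derivedFun (DFun j 0)) (n + 1) (n + 1)
        (simpOp X (sigmaFun 0) n (n + 1) (simpOp X (deltaFun i1) (n + 1) n x)) := by
    rw [simpOp_simpOp X (isVertexMap_deltaFun i1 le_rfl) (isVertexMap_sigmaFun (Nat.zero_le n))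
        (fun _ _ => rfl),
      simpOp_simpOp X ((isVertexMap_deltaFun i1 le_rfl).comp
        (isVertexMap_sigmaFun (Nat.zero_le n))) (isVertexMap_DFun_zero hj).derived
        (fun _ _ => rfl), DFun_cons, if_pos hpos]
    rfl
  rw [hx, τ.map_simpOp_derivedFun (isVertexMap_DFun_zero hj) (DFun_zero j 0), τ.s0, grpOp_one]

theorem hatSzG_cons_twD0 {n i1 : ℕ} {j : List ℕ} (hi : memS (n + 1) (n + 1) (i1 :: j))
    (x : X _⦋n + 1⦌) :
    τ.map n (simpOp X (DFun (i1 :: j) 0) (n + 1) (n + 1) x) *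
        grpOp G (deltaFun 0) (n + 1) n (hatSzG τ (n + 1) (i1 :: j) x) =
      hatSzG τ n j (simpOp X (deltaFun i1) (n + 1) n x) := by
  have hj := hi.tail
  have hi1 := hi.head_le
  have hgt : ∀ r, i1 ≤ r → τ.tauFace (fun t => DFun (i1 :: j) (r + 1) (t + 1)) x r (n - r) n =
      τ.tauFace (DFun j r) x r (n - r) n := fun r hr =>
    τ.tauFace_congr (fun t _ => DFun_cons_succ_of_lt j (by omega) t) x
  rw [τ.grpOp_deltaFun_zero_hatSzG hi, hatSzG_eq]
  rcases Nat.eq_zero_or_pos i1 with rfl | hpos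
  · rw [τ.map_simpOp_DFun_cons_zero hj]
    refine mul_prod_range_succ_eq (by rw [hgt 0 le_rfl, Nat.sub_zero]) fun r hr => ?_
    rw [hgt (r + 1) (Nat.zero_le _), τ.tauFace_simpOp_deltaFun_of_le (Nat.zero_le r) (by omega)]
  · rw [τ.map_simpOp_DFun_cons_zero_of_pos hj hpos, one_mul]
    obtain ⟨i0, rfl⟩ : ∃ i0, i1 = i0 + 1 := ⟨i1 - 1, by omega⟩
    refine prod_range_succ_eq_of_cancel
      (C := τ.tauFace (DFun j (i0 + 1)) x (i0 + 1) (n - (i0 + 1)) n) (m := i0) (by omega)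
      (fun r hr => ?_) ?_ (by rw [hgt _ le_rfl]) (fun r hr hrn => ?_)
    · rw [τ.tauFace_congr (fun t _ => DFun_cons_succ_of_le j (by omega : r + 1 ≤ i0 + 1) t),
        τ.tauFace_deltaFun_comp (isVertexMap_DFun hj (r + 1)) (by omega) (by omega) (by omega)
          (by omega)]
    · rw [τ.tauFace_congr (fun t _ => DFun_cons_succ_of_le j le_rfl t), Nat.sub_self,
        τ.tauFace_deltaFun_zero_comp (isVertexMap_DFun hj _) (by omega) (by omega), mul_inv_rev,
        inv_inv]
    · rw [hgt (r + 1) (by omega), τ.tauFace_simpOp_deltaFun_of_le (by omega) (by omega)]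

def twD0 (n : ℕ) (z : X _⦋n + 1⦌ × G _⦋n + 1⦌) : X _⦋n⦌ × G _⦋n⦌ :=
  (simpOp X (deltaFun 0) (n + 1) n z.1, τ.map n z.1 * grpOp G (deltaFun 0) (n + 1) n z.2)

theorem twD0pow_succ (r m : ℕ) (z : X _⦋m + r + 1⦌ × G _⦋m + r + 1⦌) :
    twD0pow τ (r + 1) m z = twD0pow τ r m (τ.twD0 (m + r) z) :=
  rfl

theorem twD0_hatSz_cons {n i1 : ℕ} {j : List ℕ} (hi : memS (n + 1) (n + 1) (i1 :: j))
    (x : X _⦋n + 1⦌) :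
    τ.twD0 n (hatSz τ (n + 1) (i1 :: j) x) = hatSz τ n j (simpOp X (deltaFun i1) (n + 1) n x) := by
  refine Prod.ext ?_ (τ.hatSzG_cons_twD0 hi x)
  show simpOp X (deltaFun 0) (n + 1) n (simpOp X (DFun (i1 :: j) 0) (n + 1) (n + 1) x) =
    simpOp X (DFun j 0) n n (simpOp X (deltaFun i1) (n + 1) n x)
  rw [simpOp_simpOp X (isVertexMap_DFun_zero hi) (isVertexMap_deltaFun 0 le_rfl)
      (fun _ _ => rfl),
    simpOp_simpOp X (isVertexMap_deltaFun i1 le_rfl) (isVertexMap_DFun_zero hi.tail)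
      (fun _ _ => rfl)]
  exact simpOp_congr X (fun t _ => by
    rw [deltaFun_zero_apply, DFun_cons_succ_of_le j (Nat.zero_le _), Nat.sub_zero]) x

theorem twD0pow_hatSz (k : ℕ) {l : ℕ} {i : List ℕ} (hi : memS (k + l) (k + l) i)
    (x : X _⦋k + l⦌) :
    twD0pow τ l k (hatSz τ (k + l) i x) =
      hatSz τ k (i.drop l)
        (simpOp X (restFaceMap (restList (k + l + 1) (i.take l))) (k + l) k x) := by
  induction l generalizing i with
  | zero =>
    refine congrArg (hatSz τ k i) (simpOp_eq_self X (fun t ht => ?_) x).symm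
    rw [List.take_zero, restList_nil, restFaceMap, List.getD_eq_getElem _ _ (by simp; omega),
      List.getElem_range, Nat.add_sub_cancel]
  | succ l ih =>
    obtain ⟨i1, j, rfl⟩ := List.exists_cons_of_length_eq_add_one hi.1
    replace hi : memS (k + l + 1) (k + l + 1) (i1 :: j) := hi
    have hj := hi.tail
    have hR := restList_sublist (k + l + 1) (j.take l)
    have hlen := length_restList_take hj
    calc twD0pow τ (l + 1) k (hatSz τ (k + (l + 1)) (i1 :: j) x)
        = twD0pow τ l k (τ.twD0 (k + l) (hatSz τ (k + l + 1) (i1 :: j) x)) :=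
          τ.twD0pow_succ l k _
      _ = twD0pow τ l k (hatSz τ (k + l) j (simpOp X (deltaFun i1) (k + l + 1) (k + l) x)) := by
          rw [τ.twD0_hatSz_cons hi]
      _ = hatSz τ k (j.drop l) (simpOp X (restFaceMap (restList (k + l + 1) (j.take l))) (k + l) k
            (simpOp X (deltaFun i1) (k + l + 1) (k + l) x)) :=
          ih hj _
      _ = hatSz τ k (j.drop l) (simpOp X (restFaceMap (restList (k + l + 2) (i1 :: j.take l)))
            (k + l + 1) k x) := by
          rw [restList_cons _ (by have := hi.head_le; omega), simpOp_simpOp X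
            (isVertexMap_deltaFun i1 le_rfl) (isVertexMap_restFaceMap hR hlen)
            (fun t ht => restFaceMap_map_deltaFun hR hlen ht)]

end TwistingFn

open Simplicial in
theorem szczarba_hatSz_d0_pow_general (X : SSet) (G : CategoryTheory.SimplicialObject GrpCat)
    (τ : TwistingFn X G) (k l : ℕ) (i : List ℕ) (hi : memS (k + l) (k + l) i)
    (p : ℕ → ℕ)
    (hrest : restList (k + l + 1) (i.take l) = (List.range (k + 2)).map p)
    (x : X _⦋k + l⦌) :
    twD0pow τ l k (hatSz τ (k + l) i x)
      = hatSz τ k (i.drop l) (simpOp X (fun t => p (t + 1) - 1) (k + l) k x) := by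
  rw [τ.twD0pow_hatSz k hi x, hrest]
  refine congrArg (hatSz τ k (i.drop l)) (simpOp_congr X (fun t ht => ?_) x)
  rw [restFaceMap, List.getD_eq_getElem _ _ (by simp; omega), List.getElem_map,
    List.getElem_range]

open Simplicial in
/-- Let `n = k + l` with `k, l ≥ 0`, write `i ∈ S_n` as
`i = (i_1, i_2)` with `i_1` the first `l` entries, and assume the removal
procedure of `i_1` on `{0, …, n+1}` leaves exactly `{p_0, …, p_{k+1}}`.  Then
for every `x ∈ X_n`:
`(∂_0)^l hatSz_i x = hatSz_{i_2} x(p_1 - 1, …, p_{k+1} - 1)` in `(X ×_τ G)_k`. -/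
theorem szczarba_hatSz_d0_pow (X : SSet) (G : CategoryTheory.SimplicialObject GrpCat)
    (τ : TwistingFn X G) (k l : ℕ) (i : List ℕ) (hi : memS (k + l) (k + l) i)
    (p : ℕ → ℕ) (hp0 : p 0 = 0) (hpk : p (k + 1) = k + l + 1)
    (hmono : ∀ s < k + 1, p s < p (s + 1))
    (hrest : restList (k + l + 1) (i.take l) = (List.range (k + 2)).map p)
    (x : X _⦋k + l⦌) :
    twD0pow τ l k (hatSz τ (k + l) i x)
      = hatSz τ k (i.drop l) (simpOp X (fun t => p (t + 1) - 1) (k + l) k x) :=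
  szczarba_hatSz_d0_pow_general X G τ k l i hi p hrest x
end

section
/- Let k be a commutative ring, G a group, and F a left G-set. Then for every p ≥ 0, the diagonal Δ maps the submodule 𝔞^p·k[F] of k[F] into the sum, over q + r = p, of the images of (𝔞^q·k[F]) ⊗ (𝔞^r·k[F]) in k[F] ⊗_k k[F]; that is, Δ(𝔞^p k[F]) ⊆ Σ_{q+r=p} (𝔞^q k[F]) ⊗ (𝔞^r k[F]). -/
/-- The augmentation `ε : k[G] → k`, sending every group element to `1`. -/
noncomputable def augmentation (k G : Type*) [CommRing k] [Group G] :
    MonoidAlgebra k G →ₐ[k] k :=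
  MonoidAlgebra.lift k k G 1

/-- The augmentation ideal `𝔞 = ker ε ⊲ k[G]`. -/
noncomputable def augIdeal (k G : Type*) [CommRing k] [Group G] :
    Ideal (MonoidAlgebra k G) :=
  RingHom.ker (augmentation k G).toRingHom

/-- The `k`-submodule `𝔞^p · k[F]` of `k[F]`: the `k`-submodule generated by the
products `a • m` with `a ∈ 𝔞^p` and `m ∈ k[F]`, where `k[G]` acts on
`k[F] = F →₀ k` via the permutation representation of the `G`-action on `F`. -/
noncomputable def augPowSubmodule (k G F : Type*) [CommRing k] [Group G]
    [MulAction G F] (p : ℕ) : Submodule k (F →₀ k) :=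
  Submodule.span k
    {z | ∃ a ∈ (augIdeal k G) ^ p, ∃ m : F →₀ k,
      z = ((Representation.ofMulAction k G F).asAlgebraHom a (MonoidAlgebra.ofCoeff m)).coeff}

/-- The diagonal `Δ : k[F] → k[F] ⊗_k k[F]`, `f ↦ f ⊗ f` on basis elements. -/
noncomputable def diagonal (k F : Type*) [CommRing k] :
    (F →₀ k) →ₗ[k] TensorProduct k (F →₀ k) (F →₀ k) :=
  Finsupp.lift (TensorProduct k (F →₀ k) (F →₀ k)) k F
    (fun f => Finsupp.single f 1 ⊗ₜ[k] Finsupp.single f 1)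

/-- The image of `(𝔞^q k[F]) ⊗ (𝔞^r k[F])` in `k[F] ⊗_k k[F]`. -/
noncomputable def tensorPart (k G F : Type*) [CommRing k] [Group G]
    [MulAction G F] (q r : ℕ) : Submodule k (TensorProduct k (F →₀ k) (F →₀ k)) :=
  Submodule.span k
    {z | ∃ m ∈ augPowSubmodule k G F q, ∃ n ∈ augPowSubmodule k G F r, z = m ⊗ₜ[k] n}

/-!
`Δ` intertwines the permutation action on `k[F]` with the diagonal action `g ↦ g ⊗ g` on
`k[F] ⊗ k[F]`, so `Δ (a • m) = a • Δ m` for all `a ∈ k[G]`. The augmentation ideal is spanned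
over `k` by the elements `g - 1`, and `g ⊗ g - 1 = (g - 1) ⊗ g + 1 ⊗ (g - 1)`; hence the
filtration `T_p = ∑_{q + r = p} 𝔞^q k[F] ⊗ 𝔞^r k[F]` satisfies `𝔞 • T_p ⊆ T_(p+1)`. Since
`T_0` is everything, `Δ (a • m) = a • Δ m ∈ 𝔞^p • T_0 ⊆ T_p` for `a ∈ 𝔞^p`.
-/

open scoped TensorProduct

namespace Representation

section AugmentationIdeal

variable {k G : Type*} [CommRing k] [Group G]

lemma of_sub_one_mem_augIdeal (g : G) : MonoidAlgebra.of k G g - 1 ∈ augIdeal k G := by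
  simp [augIdeal, augmentation]

lemma mul_mem_augIdeal_pow_succ {p : ℕ} {a b : MonoidAlgebra k G} (ha : a ∈ augIdeal k G)
    (hb : b ∈ augIdeal k G ^ p) : a * b ∈ augIdeal k G ^ (p + 1) := by
  rcases p with _ | p
  · rw [Submodule.pow_one]
    exact RingHom.mem_ker.mpr (by rw [map_mul, RingHom.mem_ker.mp ha, zero_mul])
  · rw [Submodule.pow_succ' _ p.succ_ne_zero]
    exact Ideal.mul_mem_mul ha hb

lemma mem_span_of_sub_one_of_mem_augIdeal {a : MonoidAlgebra k G} (ha : a ∈ augIdeal k G) :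
    a ∈ Submodule.span k (Set.range fun g => MonoidAlgebra.of k G g - 1) := by
  -- `a = a - ε(a) • 1`, and `b ↦ b - ε(b) • 1` is `k`-linear and sends `g` to `g - 1`.
  suffices h : ∀ b : MonoidAlgebra k G, b - augmentation k G b • 1 ∈
      Submodule.span k (Set.range fun g => MonoidAlgebra.of k G g - 1) by
    have hε : augmentation k G a = 0 := RingHom.mem_ker.mp ha
    simpa only [hε, zero_smul, sub_zero] using h a
  intro b
  induction b using MonoidAlgebra.induction_on with
  | of g =>
    rw [show augmentation k G (MonoidAlgebra.of k G g) = 1 by simp [augmentation], one_smul]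
    exact Submodule.subset_span ⟨g, rfl⟩
  | add b c hb hc =>
    rw [map_add, add_smul, add_sub_add_comm]
    exact add_mem hb hc
  | smul r b hb =>
    rw [map_smul, smul_eq_mul, mul_smul, ← smul_sub]
    exact Submodule.smul_mem _ r hb

end AugmentationIdeal

variable {k G U V W : Type*} [CommRing k] [Group G]
  [AddCommGroup U] [Module k U] [AddCommGroup V] [Module k V] [AddCommGroup W] [Module k W]

lemma IsIntertwiningMap.map_asAlgebraHom {ρ : Representation k G V} {σ : Representation k G W}
    {f : V →ₗ[k] W} (hf : IsIntertwiningMap ρ σ f) (a : MonoidAlgebra k G) (v : V) :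
    f (ρ.asAlgebraHom a v) = σ.asAlgebraHom a (f v) := by
  induction a using MonoidAlgebra.induction_on with
  | of g => simp only [asAlgebraHom_of, hf.isIntertwining]
  | add a b ha hb => simp only [map_add, LinearMap.add_apply, ha, hb]
  | smul r a ha => simp only [map_smul, LinearMap.smul_apply, ha]

lemma asAlgebraHom_mem_of_forall_apply_mem (τ : Representation k G U) {M : Submodule k U}
    (hM : ∀ g, ∀ x ∈ M, τ g x ∈ M) (a : MonoidAlgebra k G) {x : U} (hx : x ∈ M) :
    τ.asAlgebraHom a x ∈ M := by
  induction a using MonoidAlgebra.induction_on with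
  | of g => simpa only [asAlgebraHom_of] using hM g x hx
  | add a b ha hb =>
    rw [map_add, LinearMap.add_apply]
    exact add_mem ha hb
  | smul r a ha =>
    rw [map_smul, LinearMap.smul_apply]
    exact Submodule.smul_mem _ r ha

lemma asAlgebraHom_mem_of_mem_augIdeal (τ : Representation k G U) {M N : Submodule k U}
    (hMN : ∀ g, ∀ x ∈ M, τ g x - x ∈ N) {a : MonoidAlgebra k G} (ha : a ∈ augIdeal k G)
    {x : U} (hx : x ∈ M) : τ.asAlgebraHom a x ∈ N := by
  refine Submodule.span_induction (p := fun a _ => τ.asAlgebraHom a x ∈ N) ?_ ?_ ?_ ?_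
    (mem_span_of_sub_one_of_mem_augIdeal ha)
  · rintro _ ⟨g, rfl⟩
    simpa only [map_sub, asAlgebraHom_of, map_one, LinearMap.sub_apply, Module.End.one_apply]
      using hMN g x hx
  · simp
  · intro a b _ _ ha hb
    rw [map_add, LinearMap.add_apply]
    exact add_mem ha hb
  · intro r a _ ha
    rw [map_smul, LinearMap.smul_apply]
    exact Submodule.smul_mem _ r ha

lemma asAlgebraHom_mem_of_mem_augIdeal_pow (τ : Representation k G U) {S : ℕ → Submodule k U}
    (hS : ∀ g p, ∀ x ∈ S p, τ g x ∈ S p) (hS_sub : ∀ g p, ∀ x ∈ S p, τ g x - x ∈ S (p + 1))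
    {i : ℕ} {a : MonoidAlgebra k G} (ha : a ∈ augIdeal k G ^ i) {p : ℕ} {x : U} (hx : x ∈ S p) :
    τ.asAlgebraHom a x ∈ S (i + p) := by
  induction i generalizing a p x with
  | zero => simpa only [zero_add] using asAlgebraHom_mem_of_forall_apply_mem τ (hS · p) a hx
  | succ i ih =>
    rw [Submodule.pow_succ] at ha
    refine Submodule.mul_induction_on ha (fun b hb c hc => ?_) (fun b c hb hc => ?_)
    · rw [map_mul, Module.End.mul_apply, show i + 1 + p = i + (p + 1) by omega]
      exact ih hb (asAlgebraHom_mem_of_mem_augIdeal τ (hS_sub · p) hc hx)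
    · rw [map_add, LinearMap.add_apply]
      exact add_mem hb hc

noncomputable def augFiltration (ρ : Representation k G V) (p : ℕ) : Submodule k V :=
  Submodule.span k {z | ∃ a ∈ augIdeal k G ^ p, ∃ v : V, z = ρ.asAlgebraHom a v}

variable (ρ : Representation k G V) (σ : Representation k G W)

lemma augFiltration_zero : ρ.augFiltration 0 = ⊤ :=
  eq_top_iff.mpr fun v _ => Submodule.subset_span
    ⟨1, by simp only [Submodule.pow_zero, Ideal.one_eq_top, Submodule.mem_top], v, by simp⟩

noncomputable def tprodFiltration (p : ℕ) : Submodule k (V ⊗[k] W) :=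
  ∑ q ∈ Finset.range (p + 1),
    Submodule.map₂ (TensorProduct.mk k V W) (ρ.augFiltration q) (σ.augFiltration (p - q))

variable {ρ σ}

lemma asAlgebraHom_mem_augFiltration {p p' : ℕ} {a : MonoidAlgebra k G}
    (ha : ∀ b ∈ augIdeal k G ^ p, a * b ∈ augIdeal k G ^ p') {v : V}
    (hv : v ∈ ρ.augFiltration p) : ρ.asAlgebraHom a v ∈ ρ.augFiltration p' := by
  induction hv using Submodule.span_induction with
  | mem z hz =>
    obtain ⟨b, hb, w, rfl⟩ := hz
    rw [← Module.End.mul_apply, ← map_mul]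
    exact Submodule.subset_span ⟨a * b, ha b hb, w, rfl⟩
  | zero => simp
  | add v w _ _ hv hw =>
    rw [map_add]
    exact add_mem hv hw
  | smul r v _ hv =>
    rw [map_smul]
    exact Submodule.smul_mem _ r hv

lemma apply_mem_augFiltration (g : G) {p : ℕ} {v : V} (hv : v ∈ ρ.augFiltration p) :
    ρ g v ∈ ρ.augFiltration p := by
  simpa only [asAlgebraHom_of] using
    asAlgebraHom_mem_augFiltration (fun _ => Ideal.mul_mem_left _ (MonoidAlgebra.of k G g)) hv

lemma apply_sub_self_mem_augFiltration (g : G) {p : ℕ} {v : V} (hv : v ∈ ρ.augFiltration p) :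
    ρ g v - v ∈ ρ.augFiltration (p + 1) := by
  simpa only [map_sub, asAlgebraHom_of, map_one, LinearMap.sub_apply, Module.End.one_apply] using
    asAlgebraHom_mem_augFiltration (fun _ => mul_mem_augIdeal_pow_succ (of_sub_one_mem_augIdeal g)) hv


lemma tmul_mem_tprodFiltration {q r : ℕ} {v : V} {w : W} (hv : v ∈ ρ.augFiltration q)
    (hw : w ∈ σ.augFiltration r) : v ⊗ₜ[k] w ∈ tprodFiltration ρ σ (q + r) := by
  refine Finset.single_le_sum_of_canonicallyOrdered (f := fun q' =>
      Submodule.map₂ (TensorProduct.mk k V W) (ρ.augFiltration q') (σ.augFiltration (q + r - q')))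
    (Finset.mem_range.mpr (Nat.lt_succ_of_le (Nat.le_add_right q r))) ?_
  exact Submodule.apply_mem_map₂ _ hv (by rwa [Nat.add_sub_cancel_left])

lemma tprodFiltration_le_comap {p p' : ℕ} (φ : V ⊗[k] W →ₗ[k] V ⊗[k] W)
    (h : ∀ q r, q + r = p → ∀ v ∈ ρ.augFiltration q, ∀ w ∈ σ.augFiltration r,
      φ (v ⊗ₜ[k] w) ∈ tprodFiltration ρ σ p') :
    tprodFiltration ρ σ p ≤ (tprodFiltration ρ σ p').comap φ := by
  refine Finset.sum_induction _ (· ≤ (tprodFiltration ρ σ p').comap φ)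
    (fun _ _ ha hb => by simpa only [Submodule.add_eq_sup] using sup_le ha hb) bot_le ?_
  intro q hq
  exact Submodule.map₂_le.mpr fun v hv w hw =>
    h q (p - q) (by have := Finset.mem_range.mp hq; omega) v hv w hw

lemma tprod_apply_mem_tprodFiltration (g : G) {p : ℕ} {x : V ⊗[k] W}
    (hx : x ∈ tprodFiltration ρ σ p) : (ρ.tprod σ) g x ∈ tprodFiltration ρ σ p := by
  refine tprodFiltration_le_comap ((ρ.tprod σ) g) ?_ hx
  rintro q r rfl v hv w hw
  rw [tprod_apply, TensorProduct.map_tmul]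
  exact tmul_mem_tprodFiltration (apply_mem_augFiltration g hv) (apply_mem_augFiltration g hw)

lemma tprod_apply_sub_self_mem_tprodFiltration (g : G) {p : ℕ} {x : V ⊗[k] W}
    (hx : x ∈ tprodFiltration ρ σ p) : (ρ.tprod σ) g x - x ∈ tprodFiltration ρ σ (p + 1) := by
  refine tprodFiltration_le_comap ((ρ.tprod σ) g - 1) ?_ hx
  rintro q r rfl v hv w hw
  have h_split : ρ g v ⊗ₜ[k] σ g w - v ⊗ₜ[k] w = (ρ g v - v) ⊗ₜ[k] σ g w + v ⊗ₜ[k] (σ g w - w) := by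
    rw [TensorProduct.sub_tmul, TensorProduct.tmul_sub, sub_add_sub_cancel]
  rw [LinearMap.sub_apply, Module.End.one_apply, tprod_apply, TensorProduct.map_tmul, h_split]
  refine add_mem ?_ ?_
  · rw [Nat.add_right_comm]
    exact tmul_mem_tprodFiltration (apply_sub_self_mem_augFiltration g hv)
      (apply_mem_augFiltration g hw)
  · exact tmul_mem_tprodFiltration (r := r + 1) hv (apply_sub_self_mem_augFiltration g hw)

lemma tprodFiltration_zero : tprodFiltration ρ σ 0 = ⊤ := by
  refine Submodule.eq_top_iff'.mpr fun x => ?_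
  induction x using TensorProduct.induction_on with
  | zero => exact zero_mem _
  | tmul v w =>
    exact tmul_mem_tprodFiltration (q := 0) (r := 0) (augFiltration_zero ρ ▸ Submodule.mem_top)
      (augFiltration_zero σ ▸ Submodule.mem_top)
  | add x y hx hy => exact add_mem hx hy

theorem IsIntertwiningMap.map_augFiltration_le {π : Representation k G U}
    {f : U →ₗ[k] V ⊗[k] W} (hf : IsIntertwiningMap π (ρ.tprod σ) f) (p : ℕ) :
    (π.augFiltration p).map f ≤ tprodFiltration ρ σ p := by
  rw [augFiltration, Submodule.map_span_le]
  rintro _ ⟨a, ha, u, rfl⟩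
  have hfu : f u ∈ tprodFiltration ρ σ 0 := by
    rw [tprodFiltration_zero]
    exact Submodule.mem_top
  have h := asAlgebraHom_mem_of_mem_augIdeal_pow (ρ.tprod σ) (S := tprodFiltration ρ σ)
    (fun g _ _ => tprod_apply_mem_tprodFiltration g)
    (fun g _ _ => tprod_apply_sub_self_mem_tprodFiltration g) ha hfu
  rwa [add_zero, ← hf.map_asAlgebraHom] at h

end Representation

section PermutationRepresentation

variable (k G F : Type*) [CommRing k] [Group G] [MulAction G F]

noncomputable def finsuppOfMulAction : Representation k G (F →₀ k) :=
  ((MonoidAlgebra.coeffLinearEquiv k).conjAlgEquiv k).toAlgHom.toMonoidHom.comp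
    (Representation.ofMulAction k G F)

variable {k G F}

lemma finsuppOfMulAction_asAlgebraHom_apply (a : MonoidAlgebra k G) (m : F →₀ k) :
    (finsuppOfMulAction k G F).asAlgebraHom a m =
      ((Representation.ofMulAction k G F).asAlgebraHom a (MonoidAlgebra.ofCoeff m)).coeff := by
  have h : (finsuppOfMulAction k G F).asAlgebraHom =
      ((MonoidAlgebra.coeffLinearEquiv k).conjAlgEquiv k).toAlgHom.comp
        (Representation.ofMulAction k G F).asAlgebraHom :=
    MonoidAlgebra.algHom_ext (fun g => by simp [finsuppOfMulAction]) (Subsingleton.elim _ _)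
  rw [h]
  rfl

lemma finsuppOfMulAction_single (g : G) (f : F) (c : k) :
    finsuppOfMulAction k G F g (Finsupp.single f c) = Finsupp.single (g • f) c := by
  simp [finsuppOfMulAction]

lemma augPowSubmodule_eq_augFiltration (p : ℕ) :
    augPowSubmodule k G F p = (finsuppOfMulAction k G F).augFiltration p := by
  simp only [augPowSubmodule, Representation.augFiltration, finsuppOfMulAction_asAlgebraHom_apply]

lemma tensorPart_eq_map₂ (q r : ℕ) :
    tensorPart k G F q r = Submodule.map₂ (TensorProduct.mk k (F →₀ k) (F →₀ k))
      (augPowSubmodule k G F q) (augPowSubmodule k G F r) := by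
  rw [tensorPart, Submodule.map₂_eq_span_image2]
  congr 1
  ext z
  simp [Set.mem_image2, eq_comm]

lemma diagonal_isIntertwiningMap :
    Representation.IsIntertwiningMap (finsuppOfMulAction k G F)
      ((finsuppOfMulAction k G F).tprod (finsuppOfMulAction k G F)) (diagonal k F) := by
  refine ⟨fun g v => ?_⟩
  induction v using Finsupp.induction_linear with
  | zero => simp
  | add v w hv hw => simp only [map_add, hv, hw]
  | single f c => simp [diagonal, finsuppOfMulAction_single, Finsupp.sum_single_index]

end PermutationRepresentation

/-- Let `k` be a commutative ring, `G` a group and `F` a left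
`G`-set.  For every `p ≥ 0` the diagonal `Δ` maps `𝔞^p · k[F]` into
`Σ_{q+r=p} (𝔞^q k[F]) ⊗ (𝔞^r k[F]) ⊆ k[F] ⊗_k k[F]`. -/
theorem diagonal_augPow_filtration (k G F : Type*) [CommRing k] [Group G]
    [MulAction G F] (p : ℕ) :
    ∀ x ∈ augPowSubmodule k G F p,
      diagonal k F x ∈ ∑ q ∈ Finset.range (p + 1), tensorPart k G F q (p - q) := by
  intro x hx
  rw [augPowSubmodule_eq_augFiltration] at hx
  simp only [tensorPart_eq_map₂, augPowSubmodule_eq_augFiltration]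
  exact diagonal_isIntertwiningMap.map_augFiltration_le p (Submodule.mem_map_of_mem hx)
end
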